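/- arXiv:2411.17082 — 4 statements merged into one kernel-verified Lean document; each statement's English description precedes it below -/
import Mathlib

section
/- Let G be a profinite group acting continuously on a topological ring A by ring automorphisms, i.e. each g ∈ G acts as a ring automorphism of A and the action map G × A → A is continuous. Let J ⊆ A be an open ideal with g·J = J for every g ∈ G. Assume there exist a finite subset S ⊆ A and a subring B ⊆ A fixed pointwise by G such that the subring of A generated by B ∪ S is dense in A. Then there exists an open subgroup G₀ ≤ G such that g·a − a ∈ J for all g ∈ G₀ and all a ∈ A; that is, G₀ acts trivially on the discrete quotient ring A/J. -/
/-!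
For `g` in a small enough open subgroup, `a ↦ g • a - a` maps the finitely many generators in
`S` into the open ideal `J`, and it kills `B` outright. The set of `a` with `g • a - a ∈ J` is
the equalizer of two ring maps `A → A ⧸ J`, hence a subring, and it is closed because `J` is
open; containing the dense subring generated by `B ∪ S`, it is all of `A`. Open subgroups of a
profinite group form a basis at `1`, which provides the subgroup.
-/

theorem Ideal.map_sub_self_mem_of_dense_closure {A : Type*} [CommRing A] [TopologicalSpace A]
    [IsTopologicalAddGroup A] {J : Ideal A} (hJ : IsOpen (J : Set A)) {f : A →+* A}
    (hf : Continuous f) {T : Set A} (hT : Dense (Subring.closure T : Set A))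
    (hfT : ∀ t ∈ T, f t - t ∈ J) (a : A) : f a - a ∈ J := by
  let C : Subring A := ((Ideal.Quotient.mk J).comp f).eqLocus (Ideal.Quotient.mk J)
  have mem_C (x : A) : x ∈ C ↔ f x - x ∈ J := Ideal.Quotient.eq
  have hC_closed : IsClosed (C : Set A) := by
    have hJ_closed : IsClosed (J : Set A) := AddSubgroup.isClosed_of_isOpen J.toAddSubgroup hJ
    have hC : (C : Set A) = (fun x => f x - x) ⁻¹' J := Set.ext mem_C
    exact hC ▸ hJ_closed.preimage (hf.sub continuous_id)
  have hTC : Subring.closure T ≤ C := Subring.closure_le.2 fun t ht => (mem_C t).2 (hfT t ht)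
  have hC_univ : (C : Set A) = Set.univ := by
    rw [← hC_closed.closure_eq]
    exact (hT.mono hTC).closure_eq
  exact (mem_C a).1 (Set.eq_univ_iff_forall.1 hC_univ a)

theorem isOpen_setOf_forall_smul_sub_mem {G A : Type*} [TopologicalSpace G] [Ring A]
    [TopologicalSpace A] [IsTopologicalAddGroup A] [SMul G A]
    (hcont : Continuous fun q : G × A => q.1 • q.2) {J : Ideal A} (hJ : IsOpen (J : Set A))
    (S : Finset A) : IsOpen {g : G | ∀ s ∈ S, g • s - s ∈ J} := by
  simp only [Set.ofPred_forall]
  refine isOpen_biInter_finset fun s _ => hJ.preimage ?_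
  exact (hcont.comp (continuous_id.prodMk continuous_const)).sub continuous_const

open Pointwise in
theorem exists_open_subgroup_trivial_mod_open_ideal_general
    {G : Type*} [Group G] [TopologicalSpace G] [IsTopologicalGroup G]
    [CompactSpace G] [TotallyDisconnectedSpace G]
    {A : Type*} [CommRing A] [TopologicalSpace A] [IsTopologicalRing A]
    [MulSemiringAction G A]
    (hcont : Continuous fun q : G × A => q.1 • q.2)
    (J : Ideal A) (hJopen : IsOpen (J : Set A))
    (S : Finset A) (B : Subring A)
    (hB : ∀ g : G, ∀ b ∈ B, g • b = b)
    (hdense : Dense ((Subring.closure ((B : Set A) ∪ (S : Set A))) : Set A)) :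
    ∃ G₀ : Subgroup G, IsOpen (G₀ : Set G) ∧ ∀ g ∈ G₀, ∀ a : A, g • a - a ∈ J := by
  obtain ⟨H, hHS⟩ := ProfiniteGrp.exist_openNormalSubgroup_sub_open_nhds_of_one
    (isOpen_setOf_forall_smul_sub_mem hcont hJopen S) (by simp)
  refine ⟨H.toSubgroup, H.isOpen, fun g hg => ?_⟩
  refine Ideal.map_sub_self_mem_of_dense_closure (f := MulSemiringAction.toRingHom G A g)
    hJopen (hcont.comp (Continuous.prodMk_right g)) hdense ?_
  rintro t (htB | htS)
  · simp [hB g t htB]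
  · exact hHS hg t htS

open Pointwise in
theorem exists_open_subgroup_trivial_mod_open_ideal
    {G : Type*} [Group G] [TopologicalSpace G] [IsTopologicalGroup G]
    [CompactSpace G] [T2Space G] [TotallyDisconnectedSpace G]
    {A : Type*} [CommRing A] [TopologicalSpace A] [IsTopologicalRing A]
    [MulSemiringAction G A]
    (hcont : Continuous fun q : G × A => q.1 • q.2)
    (J : Ideal A) (hJopen : IsOpen (J : Set A))
    (hJstable : ∀ g : G, g • (J : Set A) = (J : Set A))
    (S : Finset A) (B : Subring A)
    (hB : ∀ g : G, ∀ b ∈ B, g • b = b)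
    (hdense : Dense ((Subring.closure ((B : Set A) ∪ (S : Set A))) : Set A)) :
    ∃ G₀ : Subgroup G, IsOpen (G₀ : Set G) ∧ ∀ g ∈ G₀, ∀ a : A, g • a - a ∈ J :=
  exists_open_subgroup_trivial_mod_open_ideal_general hcont J hJopen S B hB hdense
end

section
/- Let p be a prime, V a Banach space over ℚ_p, and ρ a continuous action of the additive group ℤ_p on V by continuous ℚ_p-linear automorphisms (ρ : ℤ_p → GL(V) is a group homomorphism into continuous linear automorphisms and the map ℤ_p × V → V, (z,v) ↦ ρ(z)v, is continuous). Suppose there is a real number c with 0 < c < 1 such that ‖ρ(g)v − v‖ ≤ c·‖v‖ for all g ∈ ℤ_p and all v ∈ V. Then the action is locally analytic: for every v ∈ V the orbit map ℤ_p → V, z ↦ ρ(z)v, is locally analytic. -/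
/-!
Put `T = ρ(1)`, so `ρ(n) = T^n` and `‖T - 1‖ ≤ c < 1`. Expanding `T^(p^m) = (1 + (T - 1))^(p^m)`
and using `‖C(p^m, k)‖ ≤ k p^{-m}`, the operator `N = ρ(p^m) - 1` has norm as small as we like.
By continuity and density of `ℕ` in `ℤ_p`, `ρ(p^m u) = ∑ₖ C(u, k) Nᵏ` for all `u ∈ ℤ_p`. Writing
`C(u, k)` as a polynomial in `u` whose coefficients have norm at most `‖1/k!‖ ≤ p^k`, the double
series converges absolutely once `‖N‖ < 1/p`, and summing it by powers of `u` gives the power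
series of `z ↦ ρ(z)v` on `z₀ + p^m ℤ_p`.
-/

variable {p : ℕ} [Fact p.Prime]

/-- A function `h : ℤ_p → V` with values in a `ℚ_p`-Banach space is locally analytic if
around every point `z₀` it is given, on the coset `z₀ + p^m ℤ_p` for some `m`, by a
convergent power series `h z = ∑' n, (z - z₀)^n • vₙ`. -/
def IsLocallyAnalytic {V : Type*} [NormedAddCommGroup V] [NormedSpace ℚ_[p] V]
    (h : ℤ_[p] → V) : Prop :=
  ∀ z₀ : ℤ_[p], ∃ (m : ℕ) (v : ℕ → V), ∀ z : ℤ_[p], (p : ℤ_[p]) ^ m ∣ z - z₀ →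
    HasSum (fun n : ℕ => (((z - z₀ : ℤ_[p]) : ℚ_[p]) ^ n) • v n) (h z)

open Polynomial
open scoped Nat

namespace Padic

lemma inv_le_norm_natCast {n : ℕ} (hn : n ≠ 0) : (n : ℝ)⁻¹ ≤ ‖(n : ℚ_[p])‖ := by
  rw [norm_eq_zpow_neg_valuation (Nat.cast_ne_zero.mpr hn), valuation_natCast, zpow_neg,
    zpow_natCast]
  gcongr
  · exact pow_pos (mod_cast (Fact.out : p.Prime).pos) _
  · exact_mod_cast Nat.le_of_dvd (Nat.pos_of_ne_zero hn) pow_padicValNat_dvd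

lemma norm_inv_factorial_le (k : ℕ) : ‖(k ! : ℚ_[p])⁻¹‖ ≤ (p : ℝ) ^ k := by
  rw [norm_inv, norm_eq_zpow_neg_valuation (Nat.cast_ne_zero.mpr k.factorial_ne_zero),
    valuation_natCast, zpow_neg, inv_inv, zpow_natCast]
  exact pow_le_pow_right₀ (mod_cast (Fact.out : p.Prime).one_le) (padicValNat_factorial_le p k)

/-- `k C(p^m, k) = p^m C(p^m - 1, k - 1)`, and `‖k‖ ≥ 1/k`. -/
lemma norm_choose_prime_pow_le (m : ℕ) {k : ℕ} (hk : k ≠ 0) :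
    ‖((p ^ m).choose k : ℚ_[p])‖ ≤ k * ((p : ℝ) ^ m)⁻¹ := by
  obtain ⟨j, rfl⟩ := Nat.exists_eq_add_one_of_ne_zero hk
  obtain ⟨q, hq⟩ := Nat.exists_eq_add_one_of_ne_zero (pow_ne_zero m (Fact.out : p.Prime).ne_zero)
  have hkey : ((p ^ m).choose (j + 1) * (j + 1 : ℕ) : ℚ_[p]) = (p : ℚ_[p]) ^ m * q.choose j := by
    have := Nat.add_one_mul_choose_eq q j
    rw [← hq] at this
    exact_mod_cast this.symm
  have hnorm := congrArg norm hkey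
  rw [norm_mul, norm_mul, norm_pow, norm_p, inv_pow] at hnorm
  have hq1 : ‖(q.choose j : ℚ_[p])‖ ≤ 1 := by exact_mod_cast norm_int_le_one (q.choose j : ℤ)
  have hj : ((j + 1 : ℕ) : ℝ)⁻¹ ≤ ‖((j + 1 : ℕ) : ℚ_[p])‖ := inv_le_norm_natCast (by omega)
  have hj0 : (0 : ℝ) < (j + 1 : ℕ) := by positivity
  rw [← div_le_iff₀' hj0, div_eq_mul_inv]
  calc ‖(((p ^ m).choose (j + 1) : ℕ) : ℚ_[p])‖ * ((j + 1 : ℕ) : ℝ)⁻¹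
      ≤ ‖(((p ^ m).choose (j + 1) : ℕ) : ℚ_[p])‖ * ‖((j + 1 : ℕ) : ℚ_[p])‖ := by gcongr
    _ = ((p : ℝ) ^ m)⁻¹ * ‖(q.choose j : ℚ_[p])‖ := hnorm
    _ ≤ ((p : ℝ) ^ m)⁻¹ := mul_le_of_le_one_right (by positivity) hq1

end Padic

noncomputable def binomialPolynomial (𝕜 : Type*) [Field 𝕜] (k : ℕ) : 𝕜[X] :=
  C (k ! : 𝕜)⁻¹ * descPochhammer 𝕜 k

section BinomialPolynomial

variable {𝕜 : Type*} [Field 𝕜]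

lemma binomialPolynomial_eval [CharZero 𝕜] (x : 𝕜) (k : ℕ) :
    (binomialPolynomial 𝕜 k).eval x = Ring.choose x k := by
  have h := Ring.descPochhammer_eq_factorial_smul_choose x k
  rw [← aeval_eq_smeval, aeval_def, ← eval_map, descPochhammer_map, nsmul_eq_mul] at h
  rw [binomialPolynomial, eval_mul, eval_C, h, inv_mul_cancel_left₀ (mod_cast k.factorial_ne_zero)]

lemma natDegree_binomialPolynomial_le (k : ℕ) : (binomialPolynomial 𝕜 k).natDegree ≤ k :=
  (natDegree_C_mul_le _ _).trans (descPochhammer_natDegree 𝕜 k).le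

lemma binomialPolynomial_coeff (k j : ℕ) :
    (binomialPolynomial 𝕜 k).coeff j = (k ! : 𝕜)⁻¹ * ((descPochhammer ℤ k).coeff j : 𝕜) := by
  rw [binomialPolynomial, coeff_C_mul, ← descPochhammer_map (Int.castRingHom 𝕜), coeff_map,
    eq_intCast]

end BinomialPolynomial

lemma Padic.norm_coeff_binomialPolynomial_le (k j : ℕ) :
    ‖(binomialPolynomial ℚ_[p] k).coeff j‖ ≤ (p : ℝ) ^ k := by
  rw [binomialPolynomial_coeff, norm_mul]
  exact (mul_le_mul (norm_inv_factorial_le k) (norm_int_le_one _) (norm_nonneg _)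
    (by positivity)).trans (mul_one _).le

lemma PadicInt.binomialPolynomial_eval_coe (u : ℤ_[p]) (k : ℕ) :
    (binomialPolynomial ℚ_[p] k).eval (u : ℚ_[p]) = ((Ring.choose u k : ℤ_[p]) : ℚ_[p]) :=
  (binomialPolynomial_eval _ k).trans (Ring.map_choose PadicInt.Coe.ringHom u k).symm

lemma summable_natCast_add_one_mul_geometric {r : ℝ} (hr0 : 0 ≤ r) (hr1 : r < 1) :
    Summable fun k : ℕ => ((k : ℝ) + 1) * r ^ k := by
  have h := summable_pow_mul_geometric_of_norm_lt_one 1 (by rwa [Real.norm_of_nonneg hr0])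
  simpa [add_mul] using h.add (summable_geometric_of_lt_one hr0 hr1)

/-- The double series converges absolutely since `Pₖ` has at most `k + 1` coefficients. -/
theorem hasSum_pow_smul_tsum_coeff_smul {𝕜 V : Type*} [NormedField 𝕜] [NormedAddCommGroup V]
    [NormedSpace 𝕜 V] [CompleteSpace V] (P : ℕ → 𝕜[X]) (a : ℕ → V)
    (hdeg : ∀ k, (P k).natDegree ≤ k) {C r : ℝ} (hr0 : 0 ≤ r) (hr1 : r < 1)
    (hbound : ∀ k j, ‖(P k).coeff j‖ * ‖a k‖ ≤ C * r ^ k) {x : 𝕜} (hx : ‖x‖ ≤ 1) :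
    HasSum (fun j => x ^ j • ∑' k, (P k).coeff j • a k) (∑' k, (P k).eval x • a k) := by
  set F : ℕ × ℕ → V := fun kj => ((P kj.1).coeff kj.2 * x ^ kj.2) • a kj.1
  have hF_zero (k j : ℕ) (hj : j ∉ Finset.range (k + 1)) : F (k, j) = 0 := by
    rw [Finset.mem_range, not_lt] at hj
    simp [F, coeff_eq_zero_of_natDegree_lt ((hdeg k).trans_lt hj)]
  have hF_le (k j : ℕ) : ‖F (k, j)‖ ≤ C * r ^ k := by
    rw [norm_smul, norm_mul, norm_pow, mul_right_comm]
    exact (mul_le_of_le_one_right (by positivity) (pow_le_one₀ (norm_nonneg _) hx)).trans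
      (hbound k j)
  have hF_summable : Summable fun kj => ‖F kj‖ := by
    refine (summable_prod_of_nonneg fun _ => norm_nonneg _).2 ⟨fun k => ?_, ?_⟩
    · exact summable_of_ne_finset_zero fun j hj => by rw [hF_zero k j hj, norm_zero]
    refine ((summable_natCast_add_one_mul_geometric hr0 hr1).mul_left C).of_nonneg_of_le
      (fun _ => tsum_nonneg fun _ => norm_nonneg _) fun k => ?_
    rw [tsum_eq_sum fun j hj => by rw [hF_zero k j hj, norm_zero]]
    calc ∑ j ∈ Finset.range (k + 1), ‖F (k, j)‖ ≤ ∑ _j ∈ Finset.range (k + 1), C * r ^ k :=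
          Finset.sum_le_sum fun j _ => hF_le k j
      _ = C * (((k : ℝ) + 1) * r ^ k) := by
          rw [Finset.sum_const, Finset.card_range, nsmul_eq_mul]; push_cast; ring
  obtain ⟨S, hS⟩ := hF_summable.of_norm
  have hrows (k : ℕ) : HasSum (fun j => F (k, j)) ((P k).eval x • a k) := by
    convert hasSum_sum_of_ne_finset_zero (L := .unconditional ℕ) (hF_zero k) using 1
    rw [eval_eq_sum_range' (Nat.lt_succ_of_le (hdeg k)), Finset.sum_smul]
  have hcols (j : ℕ) : HasSum (fun k => F (k, j)) (x ^ j • ∑' k, (P k).coeff j • a k) := by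
    have hsum : Summable fun k => (P k).coeff j • a k :=
      .of_norm_bounded ((summable_geometric_of_lt_one hr0 hr1).mul_left C) fun k => by
        simpa only [norm_smul] using hbound k j
    simpa only [F, smul_smul, mul_comm] using hsum.hasSum.const_smul (x ^ j)
  rw [(hS.prod_fiberwise hrows).tsum_eq]
  exact ((Equiv.prodComm ℕ ℕ).hasSum_iff.2 hS).prod_fiberwise hcols

section Mahler

variable {V : Type*} [NormedAddCommGroup V] [NormedSpace ℚ_[p] V]

lemma norm_coe_choose_smul_le (u : ℤ_[p]) (k : ℕ) (w : V) :
    ‖((Ring.choose u k : ℤ_[p]) : ℚ_[p]) • w‖ ≤ ‖w‖ := by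
  rw [norm_smul, PadicInt.padic_norm_e_of_padicInt]
  exact mul_le_of_le_one_left (norm_nonneg _) (PadicInt.norm_le_one _)

variable [CompleteSpace V]

lemma continuous_tsum_choose_smul {b : ℕ → V} (hb : Summable fun k => ‖b k‖) :
    Continuous fun u : ℤ_[p] => ∑' k, ((Ring.choose u k : ℤ_[p]) : ℚ_[p]) • b k :=
  continuous_tsum (fun k => (continuous_subtype_val.comp (PadicInt.continuous_choose k)).smul
    continuous_const) hb fun k u => norm_coe_choose_smul_le u k (b k)

lemma eq_tsum_choose_smul_of_continuous {f : ℤ_[p] → V} (hf : Continuous f) {b : ℕ → V}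
    (hb : Summable fun k => ‖b k‖)
    (hf_nat : ∀ n : ℕ, f n = ∑ k ∈ Finset.range (n + 1), (n.choose k : ℚ_[p]) • b k) (u : ℤ_[p]) :
    f u = ∑' k, ((Ring.choose u k : ℤ_[p]) : ℚ_[p]) • b k := by
  refine congrFun (PadicInt.denseRange_natCast.equalizer hf (continuous_tsum_choose_smul hb) ?_) u
  funext n
  have hzero (k : ℕ) (hk : k ∉ Finset.range (n + 1)) :
      ((Ring.choose (n : ℤ_[p]) k : ℤ_[p]) : ℚ_[p]) • b k = 0 := by
    rw [Finset.mem_range, not_lt] at hk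
    simp [Ring.choose_natCast, Nat.choose_eq_zero_of_lt hk]
  rw [Function.comp_apply, Function.comp_apply, hf_nat, tsum_eq_sum hzero]
  simp [Ring.choose_natCast]

/-- The `b k` are the Mahler coefficients of `f`; their decay faster than `p⁻ᵏ` beats the growth
`‖1/k!‖ ≤ pᵏ` of the coefficients of `C(X, k)`. -/
theorem exists_hasSum_pow_smul_of_continuous {f : ℤ_[p] → V} (hf : Continuous f) {b : ℕ → V}
    {C r : ℝ} (hr0 : 0 ≤ r) (hr : r < (p : ℝ)⁻¹) (hb : ∀ k, ‖b k‖ ≤ C * r ^ k)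
    (hf_nat : ∀ n : ℕ, f n = ∑ k ∈ Finset.range (n + 1), (n.choose k : ℚ_[p]) • b k) :
    ∃ w : ℕ → V, ∀ u : ℤ_[p], HasSum (fun j => (u : ℚ_[p]) ^ j • w j) (f u) := by
  have hp : (0 : ℝ) < p := mod_cast (Fact.out : p.Prime).pos
  have hpr : p * r < 1 := by
    simpa [hp.ne'] using mul_lt_mul_of_pos_left hr hp
  have hr1 : r < 1 := hr.trans (inv_lt_one_of_one_lt₀ (mod_cast (Fact.out : p.Prime).one_lt))
  have hb_summable : Summable fun k => ‖b k‖ :=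
    .of_nonneg_of_le (fun _ => norm_nonneg _) hb
      ((summable_geometric_of_lt_one hr0 hr1).mul_left C)
  refine ⟨fun j => ∑' k, (binomialPolynomial ℚ_[p] k).coeff j • b k, fun u => ?_⟩
  have hbound (k j : ℕ) : ‖(binomialPolynomial ℚ_[p] k).coeff j‖ * ‖b k‖ ≤ C * (p * r) ^ k := by
    calc _ ≤ (p : ℝ) ^ k * (C * r ^ k) :=
          mul_le_mul (Padic.norm_coeff_binomialPolynomial_le k j) (hb k) (norm_nonneg _)
            (by positivity)
      _ = C * (p * r) ^ k := by ring
  have h := hasSum_pow_smul_tsum_coeff_smul _ b natDegree_binomialPolynomial_le (by positivity)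
    hpr hbound (x := (u : ℚ_[p])) (by simpa using PadicInt.norm_le_one u)
  simpa only [PadicInt.binomialPolynomial_eval_coe,
    ← eq_tsum_choose_smul_of_continuous hf hb_summable hf_nat] using h

end Mahler

lemma isLocallyAnalytic_of_hasSum_pow_smul {V : Type*} [NormedAddCommGroup V]
    [NormedSpace ℚ_[p] V] {h : ℤ_[p] → V}
    (H : ∀ z₀, ∃ (m : ℕ) (w : ℕ → V), ∀ u : ℤ_[p],
      HasSum (fun j => (u : ℚ_[p]) ^ j • w j) (h (z₀ + p ^ m * u))) :
    IsLocallyAnalytic h := by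
  intro z₀
  obtain ⟨m, w, hw⟩ := H z₀
  have hp : (p : ℚ_[p]) ^ m ≠ 0 := pow_ne_zero _ (mod_cast (Fact.out : p.Prime).ne_zero)
  refine ⟨m, fun j => (((p : ℚ_[p]) ^ m)⁻¹) ^ j • w j, ?_⟩
  rintro z ⟨u, hu⟩
  rw [eq_add_of_sub_eq' hu, add_sub_cancel_left]
  convert hw u using 2 with j
  rw [smul_smul, ← mul_pow, PadicInt.coe_mul, PadicInt.coe_pow, PadicInt.coe_natCast,
    mul_right_comm, mul_inv_cancel₀ hp, one_mul]

section Operators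

variable {𝕜 V : Type*} [NormedField 𝕜] [NormedAddCommGroup V] [NormedSpace 𝕜 V]

lemma ContinuousLinearMap.norm_pow_apply_le (N : V →L[𝕜] V) {c : ℝ} (hc : 0 ≤ c)
    (hN : ∀ w, ‖N w‖ ≤ c * ‖w‖) (k : ℕ) (w : V) : ‖(N ^ k) w‖ ≤ c ^ k * ‖w‖ := by
  induction k with
  | zero => simp
  | succ k ih =>
    calc ‖(N ^ (k + 1)) w‖ = ‖N ((N ^ k) w)‖ := by rw [pow_succ', mul_apply_eq_comp]
      _ ≤ c * (c ^ k * ‖w‖) := (hN _).trans (mul_le_mul_of_nonneg_left ih hc)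
      _ = c ^ (k + 1) * ‖w‖ := by ring

lemma ContinuousLinearMap.pow_apply_eq_sum_choose (T : V →L[𝕜] V) (n : ℕ) (w : V) :
    (T ^ n) w = ∑ k ∈ Finset.range (n + 1), (n.choose k : 𝕜) • ((T - 1) ^ k) w := by
  conv_lhs => rw [← sub_add_cancel T 1, (Commute.one_right (T - 1)).add_pow, sum_apply]
  refine Finset.sum_congr rfl fun k _ => ?_
  rw [one_pow, mul_one, mul_apply_eq_comp, natCast_apply, map_nsmul, Nat.cast_smul_eq_nsmul]

end Operators

section Contraction

variable {V : Type*} [NormedAddCommGroup V] [NormedSpace ℚ_[p] V]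

lemma norm_pow_prime_pow_sub_one_apply_le (T : V →L[ℚ_[p]] V) {c : ℝ} (hc0 : 0 ≤ c)
    (hc1 : c < 1) (hT : ∀ w, ‖(T - 1) w‖ ≤ c * ‖w‖) (m : ℕ) (w : V) :
    ‖(T ^ p ^ m - 1) w‖ ≤ (∑' k : ℕ, ((k : ℝ) + 1) * c ^ k) * ((p : ℝ) ^ m)⁻¹ * ‖w‖ := by
  have hexpand : (T ^ p ^ m - 1) w = ∑ k ∈ Finset.range (p ^ m),
      ((p ^ m).choose (k + 1) : ℚ_[p]) • ((T - 1) ^ (k + 1)) w := by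
    rw [sub_apply, ContinuousLinearMap.pow_apply_eq_sum_choose,
      Finset.sum_range_succ']
    simp
  have hterm (k : ℕ) : ‖((p ^ m).choose (k + 1) : ℚ_[p]) • ((T - 1) ^ (k + 1)) w‖ ≤
      ((k : ℝ) + 1) * c ^ k * ((p : ℝ) ^ m)⁻¹ * ‖w‖ := by
    rw [norm_smul]
    calc _ ≤ ((k + 1 : ℕ) * ((p : ℝ) ^ m)⁻¹) * (c ^ (k + 1) * ‖w‖) :=
          mul_le_mul (Padic.norm_choose_prime_pow_le m k.succ_ne_zero)
            ((T - 1).norm_pow_apply_le hc0 hT _ w) (norm_nonneg _) (by positivity)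
      _ ≤ ((k + 1 : ℕ) * ((p : ℝ) ^ m)⁻¹) * (c ^ k * ‖w‖) := by
          gcongr ?_ * (?_ * _)
          exact pow_le_pow_of_le_one hc0 hc1.le k.le_succ
      _ = ((k : ℝ) + 1) * c ^ k * ((p : ℝ) ^ m)⁻¹ * ‖w‖ := by push_cast; ring
  calc ‖(T ^ p ^ m - 1) w‖
      ≤ ∑ k ∈ Finset.range (p ^ m), ((k : ℝ) + 1) * c ^ k * ((p : ℝ) ^ m)⁻¹ * ‖w‖ :=
        hexpand ▸ (norm_sum_le _ _).trans (Finset.sum_le_sum fun k _ => hterm k)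
    _ = (∑ k ∈ Finset.range (p ^ m), ((k : ℝ) + 1) * c ^ k) * ((p : ℝ) ^ m)⁻¹ * ‖w‖ := by
        rw [Finset.sum_mul, Finset.sum_mul]
    _ ≤ _ := by
      gcongr
      exact (summable_natCast_add_one_mul_geometric hc0 hc1).sum_le_tsum _ fun _ _ => by positivity

lemma exists_norm_pow_prime_pow_sub_one_apply_le (T : V →L[ℚ_[p]] V) {c : ℝ} (hc0 : 0 ≤ c)
    (hc1 : c < 1) (hT : ∀ w, ‖(T - 1) w‖ ≤ c * ‖w‖) {ε : ℝ} (hε : 0 < ε) :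
    ∃ m : ℕ, ∀ w, ‖(T ^ p ^ m - 1) w‖ ≤ ε * ‖w‖ := by
  have hp : (p : ℝ)⁻¹ < 1 := inv_lt_one_of_one_lt₀ (mod_cast (Fact.out : p.Prime).one_lt)
  have hlim := (tendsto_pow_atTop_nhds_zero_of_lt_one (by positivity) hp).const_mul
    (∑' k : ℕ, ((k : ℝ) + 1) * c ^ k)
  rw [mul_zero] at hlim
  obtain ⟨m, hm⟩ := (hlim.eventually (gt_mem_nhds hε)).exists
  refine ⟨m, fun w => (norm_pow_prime_pow_sub_one_apply_le T hc0 hc1 hT m w).trans ?_⟩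
  rw [inv_pow] at hm
  gcongr

end Contraction

lemma apply_nsmul_eq_pow_apply {M 𝕜 V : Type*} [AddMonoid M] [NormedField 𝕜]
    [NormedAddCommGroup V] [NormedSpace 𝕜 V] (ρ : M → (V ≃L[𝕜] V))
    (hρ_add : ∀ a b : M, ∀ w : V, ρ (a + b) w = ρ a (ρ b w)) (n : ℕ) (g : M) (w : V) :
    ρ (n • g) w = ((ρ g : V →L[𝕜] V) ^ n) w := by
  induction n generalizing w with
  | zero => simpa using ((ρ 0).injective (by simpa using hρ_add 0 0 w)).symm
  | succ n ih => rw [succ_nsmul', hρ_add, ih, pow_succ', mul_apply_eq_comp]; rfl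

theorem isLocallyAnalytic_orbit_of_uniform_contraction
    {V : Type*} [NormedAddCommGroup V] [NormedSpace ℚ_[p] V] [CompleteSpace V]
    (ρ : ℤ_[p] → (V ≃L[ℚ_[p]] V))
    (hρ_add : ∀ a b : ℤ_[p], ∀ w : V, ρ (a + b) w = ρ a (ρ b w))
    (hρ_cont : Continuous fun q : ℤ_[p] × V => ρ q.1 q.2)
    (c : ℝ) (hc0 : 0 < c) (hc1 : c < 1)
    (hbound : ∀ (g : ℤ_[p]) (w : V), ‖ρ g w - w‖ ≤ c * ‖w‖) :
    ∀ v : V, IsLocallyAnalytic (fun z => ρ z v) := by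
  intro v
  refine isLocallyAnalytic_of_hasSum_pow_smul fun z₀ => ?_
  set T : V →L[ℚ_[p]] V := (ρ 1).toContinuousLinearMap
  have hp : (0 : ℝ) < (p : ℝ)⁻¹ := inv_pos.2 (mod_cast (Fact.out : p.Prime).pos)
  set ε : ℝ := (p : ℝ)⁻¹ / 2
  have hε : 0 < ε := half_pos hp
  obtain ⟨m, hN⟩ := exists_norm_pow_prime_pow_sub_one_apply_le T hc0.le hc1 (hbound 1) hε
  set N := T ^ p ^ m - 1
  have hf : Continuous fun u : ℤ_[p] => ρ (z₀ + p ^ m * u) v :=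
    hρ_cont.comp ((continuous_const.add (continuous_const.mul continuous_id)).prodMk
      continuous_const)
  have hf_nat (n : ℕ) : ρ (z₀ + p ^ m * n) v =
      ∑ k ∈ Finset.range (n + 1), (n.choose k : ℚ_[p]) • ρ z₀ ((N ^ k) v) := by
    have hsmul : (p : ℤ_[p]) ^ m * n = (p ^ m * n : ℕ) • (1 : ℤ_[p]) := by simp
    rw [hρ_add, hsmul, apply_nsmul_eq_pow_apply ρ hρ_add, pow_mul,
      ContinuousLinearMap.pow_apply_eq_sum_choose, map_sum]
    simp only [map_smul]
    rfl
  have hb (k : ℕ) : ‖ρ z₀ ((N ^ k) v)‖ ≤ (‖(ρ z₀ : V →L[ℚ_[p]] V)‖ * ‖v‖) * ε ^ k :=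
    calc _ ≤ ‖(ρ z₀ : V →L[ℚ_[p]] V)‖ * (ε ^ k * ‖v‖) :=
          (ρ z₀ : V →L[ℚ_[p]] V).le_opNorm_of_le (N.norm_pow_apply_le hε.le hN k v)
      _ = _ := by ring
  exact ⟨m, exists_hasSum_pow_smul_of_continuous hf hε.le (half_lt_self hp) hb hf_nat⟩
end

section
/- Let p be a prime and K a field complete with respect to a nonarchimedean absolute value extending the p-adic absolute value of ℚ_p, with ring of integers O_K = { x ∈ K : ‖x‖ ≤ 1 }. Let A be a K-Banach algebra and A₀ ⊆ A a bounded open subring which is topologically generated over O_K by a finite set, i.e. the closure of the O_K-subalgebra of A generated by some finite subset equals A₀. Let G be a profinite group acting continuously on A by K-algebra automorphisms such that g·A₀ = A₀ for all g ∈ G. Then for every continuous group homomorphism c : ℤ_p → G and every a ∈ A, the orbit map ℤ_p → A, z ↦ c(z)·a, is locally analytic. -/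
/-!
Rescale `a` into `A₀` and let `γ = c(p^m)` with `m` so large that `γ - 1` moves the finitely many
generators of `A₀` into `p² A₀`. The twisted Leibniz rule `γ(xy) - xy = (γx - x)·γy + x·(γy - y)`
and continuity give `(γ - 1) A₀ ⊆ p² A₀`, hence `‖(γ - 1)ⁿ a‖ = O(p⁻²ⁿ)`. The Mahler expansion
`c(z₀ + p^m t)·a = ∑ₙ (t choose n) (γ - 1)ⁿ (c(z₀)·a)` holds on `ℕ` by the binomial theorem and on
`ℤ_p` by density; since the coefficients of the polynomial `t choose n` have norm at most `pⁿ`, it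
can be rearranged into a power series in `t`.
-/

open Filter Topology Finset Pointwise

noncomputable def chooseCoeff (p : ℕ) [Fact p.Prime] (n j : ℕ) : ℚ_[p] :=
  ((descPochhammer ℤ n).coeff j : ℚ_[p]) / n.factorial

section ChooseCoeff

variable {p : ℕ} [Fact p.Prime]

theorem chooseCoeff_eq_zero_of_lt {n j : ℕ} (h : n < j) : chooseCoeff p n j = 0 := by
  rw [chooseCoeff, Polynomial.coeff_eq_zero_of_natDegree_lt (by rwa [descPochhammer_natDegree]),
    Int.cast_zero, zero_div]

theorem norm_chooseCoeff_le (n j : ℕ) : ‖chooseCoeff p n j‖ ≤ (p : ℝ) ^ n := by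
  have hp : (1 : ℝ) ≤ p := by exact_mod_cast (Fact.out : p.Prime).one_lt.le
  have hn : (n.factorial : ℚ_[p]) ≠ 0 := by exact_mod_cast n.factorial_ne_zero
  calc ‖chooseCoeff p n j‖ ≤ 1 * ‖(n.factorial : ℚ_[p])‖⁻¹ := by
        rw [chooseCoeff, norm_div, div_eq_mul_inv]
        gcongr
        exact Padic.norm_int_le_one _
    _ = (p : ℝ) ^ padicValNat p n.factorial := by
        rw [one_mul, Padic.norm_eq_zpow_neg_valuation hn, Padic.valuation_natCast, zpow_neg,
          inv_inv, zpow_natCast]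
    _ ≤ (p : ℝ) ^ n := pow_le_pow_right₀ hp (padicValNat_factorial_le (p := p) n)

theorem sum_chooseCoeff_mul_pow (n : ℕ) (t : ℤ_[p]) :
    ∑ j ∈ range (n + 1), chooseCoeff p n j * (t : ℚ_[p]) ^ j =
      ((Ring.choose t n : ℤ_[p]) : ℚ_[p]) := by
  have h := congrArg ((↑) : ℤ_[p] → ℚ_[p]) (Ring.descPochhammer_eq_factorial_smul_choose t n)
  rw [← Polynomial.aeval_eq_smeval, Polynomial.aeval_eq_sum_range, descPochhammer_natDegree] at h
  have hn : (n.factorial : ℚ_[p]) ≠ 0 := by exact_mod_cast n.factorial_ne_zero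
  simp only [chooseCoeff, div_mul_eq_mul_div, ← sum_div, div_eq_iff hn]
  simp only [nsmul_eq_mul, zsmul_eq_mul, PadicInt.coe_sum, PadicInt.coe_mul, PadicInt.coe_pow,
    PadicInt.coe_intCast, PadicInt.coe_natCast] at h
  rw [h, mul_comm]

end ChooseCoeff

theorem pow_eq_sum_choose_smul_sub_one_pow {R : Type*} [Ring R] (x : R) (T : ℕ) :
    x ^ T = ∑ n ∈ range (T + 1), T.choose n • (x - 1) ^ n := by
  conv_lhs => rw [← sub_add_cancel x 1, (Commute.one_right _).add_pow]
  simp only [one_pow, mul_one, nsmul_eq_mul']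

theorem AddChar.map_add_mul_natCast_smul {Z G R A : Type*} [Semiring Z] [Monoid G] [Semiring R]
    [AddCommMonoid A] [Module R A] [DistribMulAction G A] [SMulCommClass G R A]
    (ψ : AddChar Z G) (z₀ x : Z) (T : ℕ) (a : A) :
    ψ (z₀ + x * T) • a = (DistribMulAction.toModuleEnd R A (ψ x) ^ T) (ψ z₀ • a) := by
  rw [← map_pow, DistribMulAction.toModuleEnd_apply, DistribSMul.toLinearMap_apply, smul_smul,
    ← ψ.map_nsmul_eq_pow, ← ψ.map_add_eq_mul, nsmul_eq_mul, Nat.cast_comm, add_comm]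

section PowerSeries

variable {p : ℕ} [Fact p.Prime] {K : Type*} [NormedField K] [Algebra ℚ_[p] K]
  (hK : ∀ x : ℚ_[p], ‖algebraMap ℚ_[p] K x‖ = ‖x‖)
  {E : Type*} [NormedAddCommGroup E] [NormedSpace K E]
include hK

-- For `j ≤ n`, `(p r)ⁿ ≤ σⁿ σʲ` with `σ = √(p r)`: a bound that is summable over `ℕ × ℕ`.
theorem norm_chooseCoeff_smul_le {d : ℕ → E} {C r : ℝ} (hr : 0 ≤ r) (hpr : p * r < 1)
    (hd : ∀ n, ‖d n‖ ≤ C * r ^ n) (n j : ℕ) :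
    ‖algebraMap ℚ_[p] K (chooseCoeff p n j) • d n‖ ≤
      C * √(p * r) ^ n * √(p * r) ^ j := by
  have hC : 0 ≤ C := by simpa using (norm_nonneg _).trans (hd 0)
  have hσ : √(p * r) ≤ 1 := Real.sqrt_le_one.mpr hpr.le
  rcases le_or_gt j n with hjn | hnj
  · calc ‖algebraMap ℚ_[p] K (chooseCoeff p n j) • d n‖ ≤ (p : ℝ) ^ n * (C * r ^ n) := by
          rw [norm_smul, hK]
          exact mul_le_mul (norm_chooseCoeff_le n j) (hd n) (norm_nonneg _) (by positivity)
      _ = C * √(p * r) ^ n * √(p * r) ^ n := by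
          rw [mul_assoc, ← mul_pow, Real.mul_self_sqrt (by positivity)]; ring
      _ ≤ C * √(p * r) ^ n * √(p * r) ^ j :=
          mul_le_mul_of_nonneg_left (pow_le_pow_of_le_one (Real.sqrt_nonneg _) hσ hjn)
            (by positivity)
  · rw [chooseCoeff_eq_zero_of_lt hnj, map_zero, zero_smul, norm_zero]
    positivity

theorem hasSum_pow_smul_tsum_chooseCoeff_smul [CompleteSpace E] {d : ℕ → E} {C r : ℝ}
    (hr : 0 ≤ r) (hpr : p * r < 1) (hd : ∀ n, ‖d n‖ ≤ C * r ^ n) (t : ℤ_[p]) :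
    HasSum (fun j ↦ algebraMap ℚ_[p] K ((t : ℚ_[p]) ^ j) •
        ∑' n, algebraMap ℚ_[p] K (chooseCoeff p n j) • d n)
      (∑' n, algebraMap ℚ_[p] K ((Ring.choose t n : ℤ_[p]) : ℚ_[p]) • d n) := by
  have hσ0 : 0 ≤ √(p * r) := Real.sqrt_nonneg _
  have hσ1 : √(p * r) < 1 := (Real.sqrt_lt' one_pos).mpr (by rwa [one_pow])
  have hgeom := summable_geometric_of_lt_one hσ0 hσ1
  have hC : 0 ≤ C := by simpa using (norm_nonneg _).trans (hd 0)
  set f : ℕ × ℕ → E := fun nj ↦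
    algebraMap ℚ_[p] K ((t : ℚ_[p]) ^ nj.2) • algebraMap ℚ_[p] K (chooseCoeff p nj.1 nj.2) • d nj.1
  have hf : Summable f := by
    refine .of_norm_bounded ((hgeom.mul_left C).mul_of_nonneg hgeom (fun n ↦ by positivity)
      (fun j ↦ by positivity)) fun nj ↦ ?_
    rw [norm_smul, hK, ← one_mul (C * _ * _)]
    exact mul_le_mul (by rw [norm_pow]; exact pow_le_one₀ (norm_nonneg _) t.2)
      (norm_chooseCoeff_smul_le hK hr hpr hd _ _) (norm_nonneg _) zero_le_one
  have hrow (n : ℕ) :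
      HasSum (fun j ↦ f (n, j)) (algebraMap ℚ_[p] K ((Ring.choose t n : ℤ_[p]) : ℚ_[p]) • d n) := by
    have hsum : ∑ j ∈ range (n + 1), f (n, j) =
        algebraMap ℚ_[p] K ((Ring.choose t n : ℤ_[p]) : ℚ_[p]) • d n := by
      simp only [f, smul_smul, ← map_mul, ← sum_smul, ← map_sum, mul_comm _ (chooseCoeff p n _),
        sum_chooseCoeff_mul_pow]
    refine hsum ▸ hasSum_sum_of_ne_finset_zero fun j hj ↦ ?_
    simp only [f, chooseCoeff_eq_zero_of_lt (by simpa using hj), map_zero, zero_smul, smul_zero]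
  have hcol (j : ℕ) : HasSum (fun n ↦ f (n, j)) (algebraMap ℚ_[p] K ((t : ℚ_[p]) ^ j) •
      ∑' n, algebraMap ℚ_[p] K (chooseCoeff p n j) • d n) :=
    (Summable.of_norm_bounded ((hgeom.mul_left C).mul_right _)
      (norm_chooseCoeff_smul_le hK hr hpr hd · j)).hasSum.const_smul _
  rw [(hf.hasSum.prod_fiberwise hrow).tsum_eq]
  exact ((Equiv.prodComm ℕ ℕ).hasSum_iff.mpr hf.hasSum).prod_fiberwise hcol

theorem eq_tsum_choose_smul_of_continuous_s2 [CompleteSpace E] {f : ℤ_[p] → E} (hf : Continuous f)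
    {d : ℕ → E} (hd : Summable fun n ↦ ‖d n‖)
    (hfnat : ∀ T : ℕ, f T = ∑ n ∈ range (T + 1), T.choose n • d n) :
    f = fun t ↦ ∑' n, algebraMap ℚ_[p] K ((Ring.choose t n : ℤ_[p]) : ℚ_[p]) • d n := by
  have hmap : Continuous (algebraMap ℚ_[p] K) :=
    (AddMonoidHomClass.isometry_of_norm (algebraMap ℚ_[p] K) hK).continuous
  refine PadicInt.denseRange_natCast.equalizer hf
    (continuous_tsum (fun n ↦ (hmap.comp (continuous_subtype_val.comp
      (PadicInt.continuous_choose n))).smul continuous_const) hd fun n t ↦ ?_) (funext fun T ↦ ?_)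
  · rw [norm_smul, hK]
    exact mul_le_of_le_one_left (norm_nonneg _) (Ring.choose t n).2
  · simp only [Function.comp_apply, hfnat, Ring.choose_natCast, PadicInt.coe_natCast, map_natCast,
      Nat.cast_smul_eq_nsmul]
    exact (tsum_eq_sum fun n hn ↦ by
      rw [Nat.choose_eq_zero_of_lt (by simpa using hn), zero_smul]).symm

theorem exists_hasSum_pow_smul_of_pow_apply [CompleteSpace E] {f : ℤ_[p] → E} (hf : Continuous f)
    (ρ : Module.End K E) (x : E) (hfnat : ∀ T : ℕ, f T = (ρ ^ T) x) {C r : ℝ} (hr : 0 ≤ r)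
    (hpr : p * r < 1) (hρ : ∀ n, ‖((ρ - 1) ^ n) x‖ ≤ C * r ^ n) :
    ∃ v : ℕ → E, ∀ t : ℤ_[p],
      HasSum (fun j ↦ algebraMap ℚ_[p] K ((t : ℚ_[p]) ^ j) • v j) (f t) := by
  have hr1 : r < 1 := lt_of_le_of_lt
    (le_mul_of_one_le_left hr (by exact_mod_cast (Fact.out : p.Prime).one_lt.le)) hpr
  have hsum : Summable fun n : ℕ ↦ ‖((ρ - 1) ^ n) x‖ :=
    .of_nonneg_of_le (fun _ ↦ norm_nonneg _) hρ ((summable_geometric_of_lt_one hr hr1).mul_left C)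
  refine ⟨fun j ↦ ∑' n, algebraMap ℚ_[p] K (chooseCoeff p n j) • ((ρ - 1) ^ n) x, fun t ↦ ?_⟩
  rw [eq_tsum_choose_smul_of_continuous_s2 hK hf hsum fun T ↦ by
    rw [hfnat, pow_eq_sum_choose_smul_sub_one_pow ρ, LinearMap.sum_apply]; rfl]
  exact hasSum_pow_smul_tsum_chooseCoeff_smul hK hr hpr hρ t

end PowerSeries

theorem exists_hasSum_sub_pow_smul_of_hasSum {p : ℕ} [Fact p.Prime] {K : Type*} [NormedField K]
    [Algebra ℚ_[p] K] {E : Type*} [AddCommMonoid E] [TopologicalSpace E] [Module K E]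
    (f : ℤ_[p] → E) (z₀ : ℤ_[p]) (m : ℕ) {w : ℕ → E}
    (hw : ∀ t : ℤ_[p],
      HasSum (fun j ↦ algebraMap ℚ_[p] K ((t : ℚ_[p]) ^ j) • w j) (f (z₀ + p ^ m * t))) :
    ∃ v : ℕ → E, ∀ z : ℤ_[p], (p : ℤ_[p]) ^ m ∣ z - z₀ →
      HasSum (fun j ↦ algebraMap ℚ_[p] K (((z - z₀ : ℤ_[p]) : ℚ_[p]) ^ j) • v j) (f z) := by
  have hpm : ((p : ℚ_[p]) ^ m) ≠ 0 := pow_ne_zero _ (by exact_mod_cast (Fact.out : p.Prime).ne_zero)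
  refine ⟨fun j ↦ algebraMap ℚ_[p] K (((p : ℚ_[p]) ^ m)⁻¹ ^ j) • w j, fun z ⟨t, ht⟩ ↦ ?_⟩
  convert hw t using 1
  · ext j
    rw [smul_smul, ← map_mul, ht, PadicInt.coe_mul, PadicInt.coe_pow, PadicInt.coe_natCast, mul_pow,
      mul_right_comm, ← mul_pow, mul_inv_cancel₀ hpm, one_pow, one_mul]
  · rw [← ht, add_sub_cancel]

theorem Module.End.pow_apply_mem_pow_smul {R M : Type*} [Semiring R] [AddCommMonoid M]
    [Module R M] (T : Module.End R M) {L : Set M} {c : R} (hT : ∀ y ∈ L, T y ∈ c • L) (n : ℕ) :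
    ∀ y ∈ L, (T ^ n) y ∈ c ^ n • L := by
  induction n with
  | zero => simp
  | succ n ih =>
    intro y hy
    obtain ⟨z, hz, hTz⟩ := hT y hy
    rw [pow_succ T, Module.End.mul_apply, ← hTz, map_smul, pow_succ' c, mul_smul]
    exact Set.smul_mem_smul_set (ih z hz)

theorem Module.End.norm_pow_apply_le {K E : Type*} [NormedField K] [SeminormedAddCommGroup E]
    [NormedSpace K E] (T : Module.End K E) {L : Set E} {R : ℝ} (hL : ∀ y ∈ L, ‖y‖ ≤ R) {c b : K}
    (hT : ∀ y ∈ L, T y ∈ c • L) (hb : b ≠ 0) {x : E} (hx : b • x ∈ L) (n : ℕ) :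
    ‖(T ^ n) x‖ ≤ ‖b‖⁻¹ * R * ‖c‖ ^ n := by
  obtain ⟨y, hy, hTy⟩ := T.pow_apply_mem_pow_smul hT n _ hx
  have h : ‖b‖ * ‖(T ^ n) x‖ = ‖c‖ ^ n * ‖y‖ := by
    rw [← norm_smul, ← map_smul, ← hTy, norm_smul, norm_pow]
  rw [mul_assoc, le_inv_mul_iff₀ (norm_pos_iff.2 hb), h, mul_comm R]
  exact mul_le_mul_of_nonneg_left (hL y hy) (by positivity)

theorem Subring.mul_mem_smul_toAddSubgroup {R A : Type*} [Monoid R] [Ring A]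
    [DistribMulAction R A] [SMulCommClass R A A] {B : Subring A} {r : R} {b y : A} (hb : b ∈ B)
    (hy : y ∈ r • B.toAddSubgroup) : b * y ∈ r • B.toAddSubgroup := by
  obtain ⟨z, hz, rfl⟩ := hy
  exact ⟨b * z, B.mul_mem hb hz, (mul_smul_comm _ _ _).symm⟩

theorem Subring.smul_toAddSubgroup_mul_mem {R A : Type*} [Monoid R] [Ring A]
    [DistribMulAction R A] [IsScalarTower R A A] {B : Subring A} {r : R} {b y : A} (hb : b ∈ B)
    (hy : y ∈ r • B.toAddSubgroup) : y * b ∈ r • B.toAddSubgroup := by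
  obtain ⟨z, hz, rfl⟩ := hy
  exact ⟨z * b, B.mul_mem hz hb, (smul_mul_assoc _ _ _).symm⟩

section SubringClosure

variable {M A : Type*} [Monoid M] [Ring A] [MulSemiringAction M A] {g : M} {B : Subring A}
  {I : AddSubgroup A} {X : Set A}

theorem smul_sub_self_mem_of_mem_subringClosure (hgB : ∀ b ∈ B, g • b ∈ B)
    (hIl : ∀ b ∈ B, ∀ y ∈ I, b * y ∈ I) (hIr : ∀ y ∈ I, ∀ b ∈ B, y * b ∈ I) (hXB : X ⊆ B)
    (hX : ∀ s ∈ X, g • s - s ∈ I) {x : A} (hx : x ∈ Subring.closure X) : g • x - x ∈ I := by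
  have hB : Subring.closure X ≤ B := Subring.closure_le.2 hXB
  induction hx using Subring.closure_induction with
  | mem s hs => exact hX s hs
  | zero => simp
  | one => simp
  | add x y _ _ hx hy =>
    rw [smul_add, add_sub_add_comm]
    exact I.add_mem hx hy
  | neg x _ hx =>
    rw [smul_neg, neg_sub_neg, ← neg_sub]
    exact I.neg_mem hx
  | mul x y hxX hyX hx hy =>
    have key : g • (x * y) - x * y = (g • x - x) * (g • y) + x * (g • y - y) := by
      rw [smul_mul']; noncomm_ring
    rw [key]
    exact I.add_mem (hIr _ hx _ (hgB _ (hB hyX))) (hIl _ (hB hxX) _ hy)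

theorem smul_sub_self_mem_of_mem_closure [TopologicalSpace A] [IsTopologicalAddGroup A]
    (hg : Continuous fun x : A ↦ g • x) (hI : IsClosed (I : Set A)) (hgB : ∀ b ∈ B, g • b ∈ B)
    (hIl : ∀ b ∈ B, ∀ y ∈ I, b * y ∈ I) (hIr : ∀ y ∈ I, ∀ b ∈ B, y * b ∈ I) (hXB : X ⊆ B)
    (hX : ∀ s ∈ X, g • s - s ∈ I) {x : A} (hx : x ∈ closure (Subring.closure X : Set A)) :
    g • x - x ∈ I :=
  closure_minimal (fun _ ↦ smul_sub_self_mem_of_mem_subringClosure hgB hIl hIr hXB hX)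
    (hI.preimage (hg.sub continuous_id)) hx

end SubringClosure

theorem smul_sub_self_mem_smul_of_closure_eq {K A M : Type*} [NormedField K] [NormedRing A]
    [NormedAlgebra K A] [Monoid M] [MulSemiringAction M A] [SMulCommClass M K A] {g : M}
    (hg : Continuous fun x : A ↦ g • x) {A₀ : Subring A} (hgA₀ : ∀ b ∈ A₀, g • b ∈ A₀)
    {T : Set K} {S : Set A} (hS : closure (Subring.closure (algebraMap K A '' T ∪ S) : Set A) = A₀)
    {π : K} (hπ : π ≠ 0) (hgS : ∀ s ∈ S, g • s - s ∈ π • A₀.toAddSubgroup) {x : A}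
    (hx : x ∈ A₀) : g • x - x ∈ π • A₀.toAddSubgroup := by
  refine smul_sub_self_mem_of_mem_closure hg ((hS ▸ isClosed_closure).smul_of_ne_zero hπ) hgA₀
    (fun _ hb _ ↦ Subring.mul_mem_smul_toAddSubgroup hb)
    (fun _ hy _ hb ↦ Subring.smul_toAddSubgroup_mul_mem hb hy)
    (fun y hy ↦ hS ▸ subset_closure (Subring.subset_closure hy)) ?_ (hS ▸ hx)
  rintro s (⟨k, -, rfl⟩ | hs)
  · rw [Algebra.algebraMap_eq_smul_one, smul_comm, smul_one, sub_self]
    exact zero_mem _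
  · exact hgS s hs

theorem exists_pow_smul_mem_of_mem_nhds_zero {K E : Type*} [NormedField K]
    [SeminormedAddCommGroup E] [NormedSpace K E] {π : K} (hπ : ‖π‖ < 1) {U : Set E}
    (hU : U ∈ 𝓝 0) (x : E) : ∃ k : ℕ, π ^ k • x ∈ U := by
  have h := (tendsto_pow_atTop_nhds_zero_of_norm_lt_one hπ).smul_const x
  rw [zero_smul] at h
  exact (h.eventually_mem hU).exists

theorem exists_forall_pow_smul_sub_mem {p : ℕ} [Fact p.Prime] {G A : Type*} [Monoid G]
    [TopologicalSpace G] [AddGroup A] [TopologicalSpace A] [IsTopologicalAddGroup A]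
    [DistribMulAction G A] (hcont : Continuous fun q : G × A ↦ q.1 • q.2) {c : ℤ_[p] → G}
    (hccont : Continuous c) (hc0 : c 0 = 1) {V : Set A} (hV : V ∈ 𝓝 0) (S : Finset A) :
    ∃ m : ℕ, ∀ s ∈ S, c ((p : ℤ_[p]) ^ m) • s - s ∈ V := by
  have hp : ‖(p : ℤ_[p])‖ < 1 := by
    rw [PadicInt.norm_p]
    exact inv_lt_one_of_one_lt₀ (by exact_mod_cast (Fact.out : p.Prime).one_lt)
  have hc : Tendsto (fun m : ℕ ↦ c ((p : ℤ_[p]) ^ m)) atTop (𝓝 1) :=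
    hc0 ▸ (hccont.tendsto 0).comp (tendsto_pow_atTop_nhds_zero_of_norm_lt_one hp)
  have hS : ∀ᶠ g in 𝓝 (1 : G), ∀ s ∈ S, g • s - s ∈ V := by
    refine (eventually_all_finset S).2 fun s _ ↦ ?_
    have h : Tendsto (fun g : G ↦ g • s - s) (𝓝 1) (𝓝 ((1 : G) • s - s)) :=
      ((hcont.comp (continuous_id.prodMk continuous_const)).sub continuous_const).tendsto 1
    rw [one_smul, sub_self] at h
    exact h hV
  exact (hc.eventually hS).exists

open Pointwise in
theorem orbit_map_isLocallyAnalytic_general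
    {p : ℕ} [Fact p.Prime]
    {K : Type*} [NormedField K]
    [Algebra ℚ_[p] K] (hK : ∀ x : ℚ_[p], ‖algebraMap ℚ_[p] K x‖ = ‖x‖)
    {A : Type*} [NormedRing A] [NormedAlgebra K A] [CompleteSpace A]
    (A₀ : Subring A) (hA₀open : IsOpen (A₀ : Set A))
    (hA₀bdd : Bornology.IsBounded (A₀ : Set A))
    (hA₀gen : ∃ S : Finset A,
      closure ((Subring.closure
        ((algebraMap K A '' {x : K | ‖x‖ ≤ 1}) ∪ (S : Set A))) : Set A) = (A₀ : Set A))
    {G : Type*} [Group G] [TopologicalSpace G]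
    [MulSemiringAction G A]
    (hKlin : ∀ (g : G) (k : K) (a : A), g • (k • a) = k • (g • a))
    (hcont : Continuous fun q : G × A => q.1 • q.2)
    (hstable : ∀ g : G, g • (A₀ : Set A) = (A₀ : Set A))
    (c : ℤ_[p] → G) (hc0 : c 0 = 1) (hcadd : ∀ x y : ℤ_[p], c (x + y) = c x * c y)
    (hccont : Continuous c) (a : A) :
    -- the orbit map `z ↦ c z • a` is locally analytic: around every `z₀` it is given on
    -- a coset `z₀ + p^m ℤ_p` by a convergent power series `∑' n, (z - z₀)^n • vₙ`
    ∀ z₀ : ℤ_[p], ∃ (m : ℕ) (v : ℕ → A), ∀ z : ℤ_[p], (p : ℤ_[p]) ^ m ∣ z - z₀ →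
      HasSum (fun n : ℕ =>
        (algebraMap ℚ_[p] K ((((z - z₀ : ℤ_[p]) : ℚ_[p])) ^ n)) • v n) (c z • a) := by
  intro z₀
  have : SMulCommClass G K A := ⟨hKlin⟩
  obtain ⟨S, hS⟩ := hA₀gen
  obtain ⟨R, hR⟩ := hA₀bdd.exists_norm_le
  have hp : (1 : ℝ) < p := by exact_mod_cast (Fact.out : p.Prime).one_lt
  set π : K := algebraMap ℚ_[p] K p
  have hπ : ‖π‖ = (p : ℝ)⁻¹ := by rw [hK, Padic.norm_p]
  have hπ0 : π ≠ 0 := norm_pos_iff.1 (by rw [hπ]; positivity)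
  obtain ⟨m, hm⟩ := exists_forall_pow_smul_sub_mem hcont hccont hc0
    ((hA₀open.smul₀ (pow_ne_zero 2 hπ0)).mem_nhds (zero_mem (π ^ 2 • A₀.toAddSubgroup))) S
  set γ := c ((p : ℤ_[p]) ^ m)
  have hγ (x : A) (hx : x ∈ A₀) : γ • x - x ∈ π ^ 2 • A₀.toAddSubgroup :=
    smul_sub_self_mem_smul_of_closure_eq (hcont.comp (continuous_const.prodMk continuous_id))
      (fun b hb ↦ by rw [← SetLike.mem_coe, ← hstable γ]; exact Set.smul_mem_smul_set hb) hS
      (pow_ne_zero 2 hπ0) hm hx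
  obtain ⟨k, hk⟩ := exists_pow_smul_mem_of_mem_nhds_zero (hπ ▸ inv_lt_one_of_one_lt₀ hp)
    (hA₀open.mem_nhds A₀.zero_mem) (c z₀ • a)
  have hpr : (p : ℝ) * ‖π ^ 2‖ < 1 := by
    rw [norm_pow, hπ, sq, ← mul_assoc, mul_inv_cancel₀ (by positivity), one_mul]
    exact inv_lt_one_of_one_lt₀ hp
  obtain ⟨w, hw⟩ := exists_hasSum_pow_smul_of_pow_apply hK (f := fun t ↦ c (z₀ + p ^ m * t) • a)
    (hcont.comp ((hccont.comp (continuous_const.add (continuous_const.mul continuous_id))).prodMk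
      continuous_const)) (DistribMulAction.toModuleEnd K A γ) (c z₀ • a)
    (AddChar.map_add_mul_natCast_smul ⟨c, hc0, hcadd⟩ z₀ _ · a) (norm_nonneg (π ^ 2)) hpr
    (Module.End.norm_pow_apply_le _ hR hγ (pow_ne_zero k hπ0) hk)
  exact ⟨m, exists_hasSum_sub_pow_smul_of_hasSum (fun z ↦ c z • a) z₀ m hw⟩

open Pointwise in
theorem orbit_map_isLocallyAnalytic
    {p : ℕ} [Fact p.Prime]
    {K : Type*} [NormedField K] [CompleteSpace K] [IsUltrametricDist K]
    [Algebra ℚ_[p] K] (hK : ∀ x : ℚ_[p], ‖algebraMap ℚ_[p] K x‖ = ‖x‖)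
    {A : Type*} [NormedRing A] [NormedAlgebra K A] [CompleteSpace A]
    (A₀ : Subring A) (hA₀open : IsOpen (A₀ : Set A))
    (hA₀bdd : Bornology.IsBounded (A₀ : Set A))
    (hA₀gen : ∃ S : Finset A,
      closure ((Subring.closure
        ((algebraMap K A '' {x : K | ‖x‖ ≤ 1}) ∪ (S : Set A))) : Set A) = (A₀ : Set A))
    {G : Type*} [Group G] [TopologicalSpace G] [IsTopologicalGroup G]
    [CompactSpace G] [T2Space G] [TotallyDisconnectedSpace G]
    [MulSemiringAction G A]
    (hKlin : ∀ (g : G) (k : K) (a : A), g • (k • a) = k • (g • a))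
    (hcont : Continuous fun q : G × A => q.1 • q.2)
    (hstable : ∀ g : G, g • (A₀ : Set A) = (A₀ : Set A))
    (c : ℤ_[p] → G) (hc0 : c 0 = 1) (hcadd : ∀ x y : ℤ_[p], c (x + y) = c x * c y)
    (hccont : Continuous c) (a : A) :
    -- the orbit map `z ↦ c z • a` is locally analytic: around every `z₀` it is given on
    -- a coset `z₀ + p^m ℤ_p` by a convergent power series `∑' n, (z - z₀)^n • vₙ`
    ∀ z₀ : ℤ_[p], ∃ (m : ℕ) (v : ℕ → A), ∀ z : ℤ_[p], (p : ℤ_[p]) ^ m ∣ z - z₀ →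
      HasSum (fun n : ℕ =>
        (algebraMap ℚ_[p] K ((((z - z₀ : ℤ_[p]) : ℚ_[p])) ^ n)) • v n) (c z • a) :=
  orbit_map_isLocallyAnalytic_general hK A₀ hA₀open hA₀bdd hA₀gen hKlin hcont hstable c hc0 hcadd
    hccont a
end

section
/- Let p be a prime, A a perfect commutative 𝔽_p-algebra (the Frobenius x ↦ x^p is bijective), and b ∈ A. Let W(A) denote the ring of p-typical Witt vectors of A and [b] ∈ W(A) the Teichmüller lift of b, and let W(A)⟨T⟩ denote the (p,[b])-adic completion of the polynomial ring W(A)[T]. Then the quotient ring W(A)⟨T⟩ / ( [b]·T − p , [b] ) is isomorphic to the polynomial ring (A/bA)[T], via an isomorphism sending the class of T to T and induced on coefficients by the canonical identification W(A)/(p,[b]) ≅ A/bA. -/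
/-!
For a perfect `𝔽_p`-algebra `A` and `b ∈ A`, letting `W(A)⟨T⟩` denote the
`(p, [b])`-adic completion of `W(A)[T]`, the quotient `W(A)⟨T⟩/([b]·T − p, [b])` is
isomorphic to the polynomial ring `(A/bA)[T]`, via an isomorphism sending the class of `T`
to `T` and induced on coefficients by the canonical identification `W(A)/(p,[b]) ≅ A/bA`
(whose underlying map is `x ↦ x.coeff 0 mod bA`).
-/

open AdicCompletion

section AdicAux

variable {R : Type*} [CommRing R]

theorem auxSmulTop (I : Ideal R) (n : ℕ) : (I ^ n • ⊤ : Submodule R R) = (I ^ n : Ideal R) := by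
  ext x; simp

theorem auxPowSucc {f g : R} {I : Ideal R} (hI : I = Ideal.span {f, g}) {n : ℕ} {d : R}
    (hd : d ∈ I ^ (n + 1)) :
    ∃ u v, u ∈ I ^ n ∧ v ∈ I ^ n ∧ d = f * u + g * v := by
  rw [pow_succ'] at hd
  have heq : I * I ^ n = Ideal.span {f} * I ^ n ⊔ Ideal.span {g} * I ^ n := by
    nth_rewrite 1 [hI]
    rw [Ideal.span_insert, Ideal.sup_mul]
  rw [heq] at hd
  obtain ⟨d1, hd1, d2, hd2, rfl⟩ := Submodule.mem_sup.mp hd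
  obtain ⟨u, hu, hu'⟩ := Ideal.mem_span_singleton_mul.mp hd1
  obtain ⟨v, hv, hv'⟩ := Ideal.mem_span_singleton_mul.mp hd2
  exact ⟨u, v, hu, hv, by rw [hu', hv']⟩

theorem auxKerEval {f g : R} {I : Ideal R} (hI : I = Ideal.span {f, g})
    (x : AdicCompletion I R) (hx : x.val 1 = 0) :
    x ∈ Ideal.span {algebraMap R (AdicCompletion I R) f,
      algebraMap R (AdicCompletion I R) g} := by
  obtain ⟨r, rfl⟩ := AdicCompletion.mk_surjective I R x
  have hr1 : r.val 1 ∈ I := by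
    have h0 : (AdicCompletion.mk I R r).val 1 = Submodule.mkQ _ (r.val 1) := rfl
    rw [h0] at hx
    have := (Submodule.Quotient.mk_eq_zero _).mp hx
    rwa [auxSmulTop, pow_one] at this
  have hdiff : ∀ n : ℕ, r.val (n + 2) - r.val (n + 1) ∈ I ^ (n + 1) := by
    intro n
    have := r.property (show n + 1 ≤ n + 2 by omega)
    rw [SModEq] at this
    have h2 := (Submodule.Quotient.eq _).mp this.symm
    rwa [auxSmulTop] at h2
  have step : ∀ n (a b : R), ∃ a' b' : R, f * a + g * b = r.val (n + 1) →
      (a' - a ∈ I ^ n ∧ b' - b ∈ I ^ n ∧ f * a' + g * b' = r.val (n + 2)) := by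
    intro n a b
    by_cases h : f * a + g * b = r.val (n + 1)
    · have hd : r.val (n + 2) - (f * a + g * b) ∈ I ^ (n + 1) := by rw [h]; exact hdiff n
      obtain ⟨u, v, hu, hv, huv⟩ := auxPowSucc hI hd
      refine ⟨a + u, b + v, fun _ => ⟨by simpa using hu, by simpa using hv, ?_⟩⟩
      have h3 : f * (a + u) + g * (b + v) = (f * a + g * b) + (f * u + g * v) := by ring
      rw [h3, ← huv]; ring
    · exact ⟨a, b, fun h' => absurd h' h⟩
  choose F1 F2 hF using step
  have hr1' : r.val 1 ∈ Ideal.span ({f, g} : Set R) := by rw [← hI]; exact hr1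
  obtain ⟨a0, b0, hab0⟩ := Ideal.mem_span_pair.mp hr1'
  set T : ℕ → R × R := fun n =>
    Nat.rec (motive := fun _ => R × R) (a0, b0) (fun n p => (F1 n p.1 p.2, F2 n p.1 p.2)) n
    with hT
  have hTsucc : ∀ n, T (n + 1) = (F1 n (T n).1 (T n).2, F2 n (T n).1 (T n).2) := fun n => rfl
  have hinv : ∀ n, f * (T n).1 + g * (T n).2 = r.val (n + 1) := by
    intro n
    induction n with
    | zero => show f * a0 + g * b0 = _; rw [mul_comm f a0, mul_comm g b0]; exact hab0
    | succ n ih => rw [hTsucc n]; exact (hF n (T n).1 (T n).2 ih).2.2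
  have hstep1 : ∀ n, (T (n + 1)).1 - (T n).1 ∈ I ^ n := by
    intro n; rw [hTsucc n]; exact (hF n (T n).1 (T n).2 (hinv n)).1
  have hstep2 : ∀ n, (T (n + 1)).2 - (T n).2 ∈ I ^ n := by
    intro n; rw [hTsucc n]; exact (hF n (T n).1 (T n).2 (hinv n)).2.1
  have hc : ∀ (s : ℕ → R), (∀ n, s (n + 1) - s n ∈ I ^ n) →
      ∀ n, s n ≡ s (n + 1) [SMOD (I ^ n • ⊤ : Submodule R R)] := by
    intro s hs n
    rw [SModEq, Submodule.Quotient.eq, auxSmulTop]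
    exact (I ^ n).neg_mem_iff.mp (by simpa using hs n)
  set α := AdicCauchySequence.mk I R (fun n => (T n).1) (hc _ hstep1) with hα
  set β := AdicCauchySequence.mk I R (fun n => (T n).2) (hc _ hstep2) with hβ
  have key : AdicCompletion.mk I R r =
      f • AdicCompletion.mk I R α + g • AdicCompletion.mk I R β := by
    ext n
    have hval : (f • AdicCompletion.mk I R α + g • AdicCompletion.mk I R β).val n =
        f • Submodule.mkQ (I ^ n • ⊤ : Submodule R R) ((T n).1) +
        g • Submodule.mkQ (I ^ n • ⊤ : Submodule R R) ((T n).2) := rfl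
    rw [hval]
    show Submodule.mkQ _ (r.val n) = _
    rw [← map_smul, ← map_smul, ← map_add]
    have h4 : f • (T n).1 + g • (T n).2 = r.val (n + 1) := by
      rw [smul_eq_mul, smul_eq_mul]; exact hinv n
    rw [h4]
    rw [Submodule.mkQ_apply, Submodule.mkQ_apply, Submodule.Quotient.eq]
    have h5 := r.property (show n ≤ n + 1 by omega)
    rw [SModEq, Submodule.Quotient.eq] at h5
    exact h5
  rw [key]
  refine Ideal.add_mem _ ?_ ?_
  · rw [Algebra.smul_def]
    exact Ideal.mul_mem_right _ _ (Ideal.subset_span (Set.mem_insert _ _))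
  · rw [Algebra.smul_def]
    exact Ideal.mul_mem_right _ _ (Ideal.subset_span (Set.mem_insert_of_mem _ rfl))

end AdicAux

section WittAux

variable (p : ℕ) [Fact p.Prime] (A : Type*) [CommRing A] [CharP A p] [PerfectRing A p]

theorem auxPMul (y : WittVector p A) (hy : y.coeff 0 = 0) :
    ∃ z, y = p * z := by
  set w : WittVector p A := WittVector.mk p (fun n => y.coeff (n + 1)) with hw
  have hv : WittVector.verschiebung w = y := by
    ext n
    cases n with
    | zero => rw [WittVector.verschiebung_coeff_zero, hy]
    | succ n => rw [WittVector.verschiebung_coeff_succ]; rfl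
  refine ⟨(WittVector.frobeniusEquiv p A).symm w, ?_⟩
  have h1 := WittVector.verschiebung_frobenius ((WittVector.frobeniusEquiv p A).symm w)
  have h2 : WittVector.frobenius ((WittVector.frobeniusEquiv p A).symm w) = w := by
    have := (WittVector.frobeniusEquiv p A).apply_symm_apply w
    rwa [WittVector.frobeniusEquiv_apply] at this
  rw [h2, hv] at h1
  exact h1.trans (mul_comm _ _)

/-- The map `W(A) → A/(b)`, `x ↦ x.coeff 0 mod b`, as a ring hom. -/
noncomputable def wmap (b : A) : WittVector p A →+* A ⧸ Ideal.span {b} :=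
  (Ideal.Quotient.mk (Ideal.span {b})).comp (WittVector.constantCoeff)

theorem wmap_apply (b : A) (x : WittVector p A) :
    wmap p A b x = Ideal.Quotient.mk (Ideal.span {b}) (x.coeff 0) := rfl

theorem wmap_surjective (b : A) : Function.Surjective (wmap p A b) := by
  intro y
  obtain ⟨a, rfl⟩ := Ideal.Quotient.mk_surjective y
  exact ⟨WittVector.teichmuller p a, by rw [wmap_apply, WittVector.teichmuller_coeff_zero]⟩

theorem ker_wmap (b : A) : RingHom.ker (wmap p A b) =
    Ideal.span {(p : WittVector p A), WittVector.teichmuller p b} := by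
  ext x
  constructor
  · intro hx
    have h0 : x.coeff 0 ∈ Ideal.span {b} := by
      rw [RingHom.mem_ker, wmap_apply, Ideal.Quotient.eq_zero_iff_mem] at hx
      exact hx
    obtain ⟨c, hc⟩ := Ideal.mem_span_singleton.mp h0
    have hsub : (x - WittVector.teichmuller p (x.coeff 0)).coeff 0 = 0 := by
      have : (x - WittVector.teichmuller p (x.coeff 0)).coeff 0 =
          WittVector.constantCoeff (x - WittVector.teichmuller p (x.coeff 0)) := rfl
      rw [this, map_sub]
      simp [WittVector.teichmuller_coeff_zero]
    obtain ⟨z, hz⟩ := auxPMul p A _ hsub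
    rw [Ideal.mem_span_pair]
    refine ⟨z, WittVector.teichmuller p c, ?_⟩
    have hx' : x = (p : WittVector p A) * z + WittVector.teichmuller p (x.coeff 0) := by
      rw [← hz]; ring
    rw [hx', hc, MonoidHom.map_mul]
    ring
  · intro hx
    refine Ideal.span_le.mpr ?_ hx
    rintro y hy
    simp only [Set.mem_insert_iff, Set.mem_singleton_iff] at hy
    rcases hy with rfl | rfl
    · rw [SetLike.mem_coe, RingHom.mem_ker, map_natCast]
      rw [← map_natCast (Ideal.Quotient.mk (Ideal.span {b})), CharP.cast_eq_zero A p, _root_.map_zero]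
    · rw [SetLike.mem_coe, RingHom.mem_ker, wmap_apply, WittVector.teichmuller_coeff_zero,
        Ideal.Quotient.eq_zero_iff_mem]
      exact Ideal.subset_span rfl

end WittAux

open Polynomial

variable (p : ℕ) [Fact p.Prime] (A : Type*) [CommRing A] [CharP A p] [PerfectRing A p]

/-- The polynomial ring `W(A)[T]` over the `p`-typical Witt vectors of `A`. -/
abbrev WittPolynomialRing := Polynomial (WittVector p A)

/-- The ideal `(p, [b]) ⊆ W(A)[T]`. -/
noncomputable def wittIdeal (b : A) : Ideal (WittPolynomialRing p A) :=
  Ideal.span {(p : WittPolynomialRing p A), Polynomial.C (WittVector.teichmuller p b)}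

/-- `W(A)⟨T⟩`, the `(p, [b])`-adic completion of `W(A)[T]`. -/
abbrev WittCompletion (b : A) := AdicCompletion (wittIdeal p A b) (WittPolynomialRing p A)

/-- The ideal `([b]·T − p, [b])` of `W(A)⟨T⟩`. -/
noncomputable def wittQuotIdeal (b : A) : Ideal (WittCompletion p A b) :=
  Ideal.span
    {algebraMap (WittPolynomialRing p A) (WittCompletion p A b)
        (Polynomial.C (WittVector.teichmuller p b) * Polynomial.X -
          (p : WittPolynomialRing p A)),
      algebraMap (WittPolynomialRing p A) (WittCompletion p A b)
        (Polynomial.C (WittVector.teichmuller p b))}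

/-- `W(A)/(p,[b]) ≃ A/(b)`. -/
noncomputable def eW (b : A) :
    (WittVector p A ⧸ Ideal.span {(p : WittVector p A), WittVector.teichmuller p b}) ≃+*
      A ⧸ Ideal.span {b} :=
  (Ideal.quotEquivOfEq (ker_wmap p A b).symm).trans
    (RingHom.quotientKerEquivOfSurjective (wmap_surjective p A b))

theorem eW_mk (b : A) (x : WittVector p A) :
    eW p A b (Ideal.Quotient.mk _ x) = Ideal.Quotient.mk (Ideal.span {b}) (x.coeff 0) := by
  show RingHom.quotientKerEquivOfSurjective (wmap_surjective p A b)
    (Ideal.quotEquivOfEq (ker_wmap p A b).symm (Ideal.Quotient.mk _ x)) = _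
  rw [Ideal.quotEquivOfEq_mk]
  exact RingHom.kerLift_mk (wmap p A b) x

theorem wittIdeal_eq_map (b : A) : wittIdeal p A b =
    Ideal.map (Polynomial.C : WittVector p A →+* WittPolynomialRing p A)
      (Ideal.span {(p : WittVector p A), WittVector.teichmuller p b}) := by
  rw [Ideal.map_span, wittIdeal]
  congr 1
  rw [Set.image_insert_eq, Set.image_singleton, map_natCast]

/-- `W(A)[T]/(p,[b]) ≃ (A/b)[T]`. -/
noncomputable def eP (b : A) :
    (WittPolynomialRing p A ⧸ wittIdeal p A b) ≃+* Polynomial (A ⧸ Ideal.span {b}) :=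
  (Ideal.quotEquivOfEq (wittIdeal_eq_map p A b)).trans
    ((Ideal.polynomialQuotientEquivQuotientPolynomial _).symm.trans
      (Polynomial.mapEquiv (eW p A b)))

theorem eP_mk (b : A) (f : WittPolynomialRing p A) :
    eP p A b (Ideal.Quotient.mk (wittIdeal p A b) f) =
      (f.map (Ideal.Quotient.mk
        (Ideal.span {(p : WittVector p A), WittVector.teichmuller p b}))).map (eW p A b) := by
  show Polynomial.mapEquiv (eW p A b)
    ((Ideal.polynomialQuotientEquivQuotientPolynomial _).symm
      (Ideal.quotEquivOfEq (wittIdeal_eq_map p A b) (Ideal.Quotient.mk _ f))) = _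
  rw [Ideal.quotEquivOfEq_mk, Ideal.polynomialQuotientEquivQuotientPolynomial_symm_mk,
    Polynomial.mapEquiv_apply]

/-- `W(A)⟨T⟩ / ([b]·T − p, [b]) ≅ (A/bA)[T]`, sending the class of `T` to `T` and acting on
coefficients through the canonical identification `W(A)/(p,[b]) ≅ A/bA`. -/
theorem wittCompletion_quotient_iso_polynomial (b : A) :
    ∃ e : (WittCompletion p A b ⧸ wittQuotIdeal p A b) ≃+*
        Polynomial (A ⧸ Ideal.span {b}),
      e (Ideal.Quotient.mk (wittQuotIdeal p A b)
          (algebraMap (WittPolynomialRing p A) (WittCompletion p A b) Polynomial.X))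
        = Polynomial.X ∧
      ∀ x : WittVector p A,
        e (Ideal.Quotient.mk (wittQuotIdeal p A b)
            (algebraMap (WittPolynomialRing p A) (WittCompletion p A b) (Polynomial.C x)))
          = Polynomial.C (Ideal.Quotient.mk (Ideal.span {b}) (x.coeff 0)) := by
  set I := wittIdeal p A b with hIdef
  let q1 : (WittPolynomialRing p A ⧸ I ^ 1) ≃+* (WittPolynomialRing p A ⧸ I) :=
    Ideal.quotEquivOfEq (pow_one I)
  let φ : WittCompletion p A b →+* Polynomial (A ⧸ Ideal.span {b}) :=
    ((eP p A b).toRingHom.comp q1.toRingHom).comp (AdicCompletion.evalₐ I 1).toRingHom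
  have hφalg : ∀ r : WittPolynomialRing p A,
      φ (algebraMap _ _ r) = eP p A b (Ideal.Quotient.mk I r) := by
    intro r
    have h := (AdicCompletion.evalₐ I 1).commutes r
    show eP p A b (q1 (AdicCompletion.evalₐ I 1 (algebraMap _ _ r))) = _
    rw [h, Ideal.Quotient.algebraMap_eq, Ideal.quotEquivOfEq_mk]
  have hφsurj : Function.Surjective φ := by
    intro y
    obtain ⟨z, hz⟩ := (eP p A b).surjective y
    obtain ⟨r, rfl⟩ := Ideal.Quotient.mk_surjective z
    exact ⟨algebraMap _ _ r, by rw [hφalg]; exact hz⟩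
  have hIspan : I = Ideal.span {((p : ℕ) : WittPolynomialRing p A),
      Polynomial.C (WittVector.teichmuller p b)} := rfl
  have hker : wittQuotIdeal p A b = RingHom.ker φ := by
    apply le_antisymm
    · rw [wittQuotIdeal, Ideal.span_le]
      have hgen : ∀ s : WittPolynomialRing p A, s ∈ I → φ (algebraMap _ _ s) = 0 := by
        intro s hs
        rw [hφalg, Ideal.Quotient.eq_zero_iff_mem.mpr hs, _root_.map_zero]
      rintro y hy
      simp only [Set.mem_insert_iff, Set.mem_singleton_iff] at hy
      rcases hy with rfl | rfl
      · rw [SetLike.mem_coe, RingHom.mem_ker]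
        apply hgen
        rw [hIspan]
        refine Ideal.sub_mem _
          (Ideal.mul_mem_right _ _ (Ideal.subset_span (Set.mem_insert_of_mem _ rfl)))
          (Ideal.subset_span (Set.mem_insert _ _))
      · exact RingHom.mem_ker.mpr (hgen _ (by
          rw [hIspan]; exact Ideal.subset_span (Set.mem_insert_of_mem _ rfl)))
    · intro x hxk
      rw [RingHom.mem_ker] at hxk
      have h1 : AdicCompletion.evalₐ I 1 x = 0 := by
        have h2 : eP p A b (q1 (AdicCompletion.evalₐ I 1 x)) = 0 := hxk
        have h3 : q1 (AdicCompletion.evalₐ I 1 x) = 0 :=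
          (eP p A b).injective (by rw [h2, _root_.map_zero])
        exact q1.injective (by rw [h3, _root_.map_zero])
      obtain ⟨r, rfl⟩ := AdicCompletion.mk_surjective I _ x
      have hval : (AdicCompletion.mk I _ r).val 1 = 0 := by
        rw [AdicCompletion.evalₐ_mk] at h1
        have h4 := Ideal.Quotient.eq_zero_iff_mem.mp h1
        show Submodule.mkQ _ (r.val 1) = 0
        rw [Submodule.mkQ_apply, Submodule.Quotient.mk_eq_zero, auxSmulTop]
        exact h4
      have hmem := auxKerEval hIspan (AdicCompletion.mk I _ r) hval
      refine Ideal.span_le.mpr ?_ hmem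
      rintro y hy
      simp only [Set.mem_insert_iff, Set.mem_singleton_iff] at hy
      rcases hy with rfl | rfl
      · have heq : algebraMap _ (WittCompletion p A b) ((p : ℕ) : WittPolynomialRing p A) =
            algebraMap _ _ (Polynomial.C (WittVector.teichmuller p b)) *
              algebraMap _ _ (Polynomial.X : WittPolynomialRing p A) -
            algebraMap _ _ (Polynomial.C (WittVector.teichmuller p b) * Polynomial.X -
              ((p : ℕ) : WittPolynomialRing p A)) := by
          rw [map_sub, map_mul]; ring
        rw [SetLike.mem_coe, heq]
        exact Ideal.sub_mem _
          (Ideal.mul_mem_right _ _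
            (Ideal.subset_span (Set.mem_insert_of_mem _ rfl)))
          (Ideal.subset_span (Set.mem_insert _ _))
      · exact Ideal.subset_span (Set.mem_insert_of_mem _ rfl)
  have happ : ∀ y, (RingHom.quotientKerEquivOfSurjective hφsurj)
      (Ideal.Quotient.mk (RingHom.ker φ) y) = φ y := fun y => RingHom.kerLift_mk φ y
  refine ⟨(Ideal.quotEquivOfEq hker).trans (RingHom.quotientKerEquivOfSurjective hφsurj),
    ?_, ?_⟩
  · show RingHom.quotientKerEquivOfSurjective hφsurj
      (Ideal.quotEquivOfEq hker (Ideal.Quotient.mk _ _)) = _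
    rw [Ideal.quotEquivOfEq_mk, happ, hφalg, eP_mk,
      Polynomial.map_X, Polynomial.map_X]
  · intro x
    show RingHom.quotientKerEquivOfSurjective hφsurj
      (Ideal.quotEquivOfEq hker (Ideal.Quotient.mk _ _)) = _
    rw [Ideal.quotEquivOfEq_mk, happ, hφalg, eP_mk,
      Polynomial.map_C, Polynomial.map_C]
    simp only [RingHom.coe_coe]
    rw [eW_mk]
end
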